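/- For n qubits, let M(n) be the ZZ sign matrix with columns (sᵢsⱼ)_{i<j} for s ∈ {±1}ⁿ with s₁=1. Then the origin of ℝ^{n(n−1)/2} lies in the interior of the convex hull of the columns of M(n), for all n ≥ 3. -/

import Mathlib

/-!
The columns `c_s` with `s₁ = 1` are orthogonal: every coordinate sums to zero over `s`, and so does
the product of two distinct coordinates `(i, j) ≠ (k, l)`, since flipping a bit lying in exactly
one of the two pairs (never the first bit) is a sign-reversing involution of the half-cube.
Hence for any `x` the weights `w_s = 1 + ⟨x, c_s⟩` satisfy `∑ w_s c_s = N x` and `∑ w_s = N`,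
with `N` the number of columns, and they are nonnegative as soon as `∑ |x_q| ≤ 1`.
So the convex hull contains the open `ℓ¹`-unit ball around the origin.
-/

open Finset

section OrthogonalFamily

variable {α ι : Type*} [Fintype ι] {S : Finset α} {v : α → ι → ℝ}

theorem sum_one_add_sum_mul_eq_card (hsum : ∀ q, ∑ s ∈ S, v s q = 0) (x : ι → ℝ) :
    ∑ s ∈ S, (1 + ∑ q, x q * v s q) = #S := by
  simp [sum_add_distrib, sum_comm (s := S), ← mul_sum, hsum]

theorem sum_one_add_sum_mul_smul_eq_card_smul [DecidableEq ι]
    (hsum : ∀ q, ∑ s ∈ S, v s q = 0)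
    (horth : ∀ p q, ∑ s ∈ S, v s p * v s q = if p = q then (#S : ℝ) else 0) (x : ι → ℝ) :
    ∑ s ∈ S, (1 + ∑ q, x q * v s q) • v s = (#S : ℝ) • x := by
  funext p
  simp only [Finset.sum_apply, Pi.smul_apply, smul_eq_mul, add_mul, one_mul, sum_add_distrib,
    hsum, zero_add, sum_mul]
  rw [sum_comm]
  simp_rw [mul_assoc, ← mul_sum, horth, mul_ite, mul_zero, sum_ite_eq', mem_univ, if_true,
    mul_comm]

theorem one_add_sum_mul_nonneg {w : ι → ℝ} (hw : ∀ q, |w q| ≤ 1) {x : ι → ℝ}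
    (hx : ∑ q, |x q| ≤ 1) : 0 ≤ 1 + ∑ q, x q * w q := by
  have : |∑ q, x q * w q| ≤ 1 :=
    calc |∑ q, x q * w q| ≤ ∑ q, |x q| * |w q| := by
          simpa only [abs_mul] using abs_sum_le_sum_abs (fun q => x q * w q) univ
      _ ≤ ∑ q, |x q| := sum_le_sum fun q _ => mul_le_of_le_one_right (abs_nonneg _) (hw q)
      _ ≤ 1 := hx
  linarith [neg_abs_le (∑ q, x q * w q)]

theorem mem_convexHull_of_sum_abs_le_one [DecidableEq ι] (hS : S.Nonempty)
    (hbound : ∀ s ∈ S, ∀ q, |v s q| ≤ 1) (hsum : ∀ q, ∑ s ∈ S, v s q = 0)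
    (horth : ∀ p q, ∑ s ∈ S, v s p * v s q = if p = q then (#S : ℝ) else 0)
    {x : ι → ℝ} (hx : ∑ q, |x q| ≤ 1) : x ∈ convexHull ℝ (v '' S) := by
  have hcard : (#S : ℝ) ≠ 0 := by simpa using hS.card_pos.ne'
  have hx_eq : S.centerMass (fun s => 1 + ∑ q, x q * v s q) v = x := by
    rw [centerMass, sum_one_add_sum_mul_eq_card hsum,
      sum_one_add_sum_mul_smul_eq_card_smul hsum horth, inv_smul_smul₀ hcard]
  rw [← hx_eq]
  refine centerMass_mem_convexHull _ (fun s hs => one_add_sum_mul_nonneg (hbound s hs) hx) ?_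
    fun s hs => Set.mem_image_of_mem v hs
  rw [sum_one_add_sum_mul_eq_card hsum]
  positivity

theorem zero_mem_interior_convexHull_of_orthogonal [DecidableEq ι] (hS : S.Nonempty)
    (hbound : ∀ s ∈ S, ∀ q, |v s q| ≤ 1) (hsum : ∀ q, ∑ s ∈ S, v s q = 0)
    (horth : ∀ p q, ∑ s ∈ S, v s p * v s q = if p = q then (#S : ℝ) else 0) :
    (0 : ι → ℝ) ∈ interior (convexHull ℝ (v '' S)) :=
  mem_interior.mpr ⟨{x | ∑ q, |x q| < 1},
    fun _ hx => mem_convexHull_of_sum_abs_le_one hS hbound hsum horth hx.le,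
    isOpen_lt (by fun_prop) continuous_const, by simp⟩

end OrthogonalFamily

def boolSign (b : Bool) : ℝ := if b then 1 else -1

theorem boolSign_not (b : Bool) : boolSign (!b) = -boolSign b := by
  cases b <;> simp [boolSign]

theorem boolSign_mul_self (b : Bool) : boolSign b * boolSign b = 1 := by
  cases b <;> simp [boolSign]

theorem abs_boolSign (b : Bool) : |boolSign b| = 1 := by
  cases b <;> simp [boolSign]

section FlipBit

variable {α : Type*} [DecidableEq α]

def flipBit (m : α) (s : α → Bool) : α → Bool := Function.update s m (!s m)

theorem flipBit_flipBit (m : α) (s : α → Bool) : flipBit m (flipBit m s) = s := by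
  simp [flipBit]

theorem boolSign_flipBit (m i : α) (s : α → Bool) :
    boolSign (flipBit m s i) = if i = m then -boolSign (s i) else boolSign (s i) := by
  by_cases h : i = m
  · subst h; simp [flipBit, boolSign_not]
  · simp [flipBit, h]

theorem sum_filter_eq_zero_of_flipBit [Fintype α] {i₀ m : α} (hm : m ≠ i₀)
    {f : (α → Bool) → ℝ} (hf : ∀ s, f (flipBit m s) = -f s) :
    ∑ s with s i₀ = true, f s = 0 := by
  refine sum_involution (fun s _ => flipBit m s) (fun s _ => by rw [hf]; ring)
    (fun s _ _ h => by simpa [flipBit] using congrFun h m)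
    (fun s hs => ?_) (fun s _ => flipBit_flipBit m s)
  simpa [flipBit, Function.update_of_ne hm.symm] using hs

end FlipBit

section ZZColumn

variable {α : Type*} [LinearOrder α]

def zzColumn (s : α → Bool) (p : {p : α × α // p.1 < p.2}) : ℝ :=
  boolSign (s p.1.1) * boolSign (s p.1.2)

theorem zzColumn_mul_self (s : α → Bool) (p : {p : α × α // p.1 < p.2}) :
    zzColumn s p * zzColumn s p = 1 := by
  rw [zzColumn, mul_mul_mul_comm, boolSign_mul_self, boolSign_mul_self, one_mul]

theorem abs_zzColumn (s : α → Bool) (p : {p : α × α // p.1 < p.2}) : |zzColumn s p| = 1 := by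
  rw [zzColumn, abs_mul, abs_boolSign, abs_boolSign, one_mul]

theorem zzColumn_flipBit_of_mem {m : α} {p : {p : α × α // p.1 < p.2}}
    (hm : m = p.1.1 ∨ m = p.1.2) (s : α → Bool) :
    zzColumn (flipBit m s) p = -zzColumn s p := by
  obtain rfl | rfl := hm <;> simp [zzColumn, boolSign_flipBit, p.2.ne, p.2.ne']

theorem zzColumn_flipBit_of_not_mem {m : α} {p : {p : α × α // p.1 < p.2}}
    (hm : ¬(m = p.1.1 ∨ m = p.1.2)) (s : α → Bool) :
    zzColumn (flipBit m s) p = zzColumn s p := by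
  rw [not_or] at hm
  simp [zzColumn, boolSign_flipBit, Ne.symm hm.1, Ne.symm hm.2]

theorem exists_mem_iff_not_mem_of_ne {p q : {p : α × α // p.1 < p.2}} (hpq : p ≠ q) :
    ∃ m, min p.1.1 q.1.1 < m ∧ ((m = p.1.1 ∨ m = p.1.2) ↔ ¬(m = q.1.1 ∨ m = q.1.2)) := by
  obtain ⟨⟨i, j⟩, hij⟩ := p
  obtain ⟨⟨k, l⟩, hkl⟩ := q
  simp only [ne_eq, Subtype.mk.injEq, Prod.mk.injEq, not_and_or] at hpq ⊢
  rcases lt_trichotomy j l with h | rfl | h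
  · exact ⟨l, min_lt_of_right_lt hkl, by grind⟩
  · rcases lt_trichotomy i k with h | rfl | h
    · exact ⟨k, min_lt_of_left_lt h, by grind⟩
    · simp at hpq
    · exact ⟨i, min_lt_of_right_lt h, by grind⟩
  · exact ⟨j, min_lt_of_left_lt hij, by grind⟩

variable [Fintype α] {i₀ : α}

theorem sum_zzColumn_eq_zero (hi₀ : IsBot i₀) (p : {p : α × α // p.1 < p.2}) :
    ∑ s with s i₀ = true, zzColumn s p = 0 :=
  sum_filter_eq_zero_of_flipBit ((hi₀ _).trans_lt p.2).ne' (zzColumn_flipBit_of_mem (Or.inr rfl))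

theorem sum_zzColumn_mul_zzColumn (hi₀ : IsBot i₀) (p q : {p : α × α // p.1 < p.2}) :
    ∑ s with s i₀ = true, zzColumn s p * zzColumn s q =
      if p = q then (#{s : α → Bool | s i₀ = true} : ℝ) else 0 := by
  split_ifs with hpq
  · simp [hpq, zzColumn_mul_self]
  obtain ⟨m, hm, hmem⟩ := exists_mem_iff_not_mem_of_ne hpq
  refine sum_filter_eq_zero_of_flipBit ((le_min (hi₀ _) (hi₀ _)).trans_lt hm).ne' fun s => ?_
  by_cases hp : m = p.1.1 ∨ m = p.1.2
  · rw [zzColumn_flipBit_of_mem hp, zzColumn_flipBit_of_not_mem (hmem.mp hp), neg_mul]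
  · rw [zzColumn_flipBit_of_not_mem hp, zzColumn_flipBit_of_mem (not_not.mp (mt hmem.mpr hp)),
      mul_neg]

end ZZColumn

/-- For n ≥ 3, the origin of ℝ^{n(n−1)/2} lies in the interior of the convex hull of the
columns of the ZZ sign matrix M(n) (columns (sᵢsⱼ)_{i<j} for s ∈ {±1}ⁿ with s₁ = 1). -/
theorem stmt_9 (n : ℕ) (hn : 3 ≤ n) :
    (0 : {p : Fin n × Fin n // p.1 < p.2} → ℝ) ∈
      interior (convexHull ℝ
        {c : {p : Fin n × Fin n // p.1 < p.2} → ℝ |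
          ∃ s : Fin n → Bool, s ⟨0, by omega⟩ = true ∧
            c = fun p => (if s p.1.1 then (1 : ℝ) else -1) *
                          (if s p.1.2 then (1 : ℝ) else -1)}) := by
  have hi₀ : IsBot (⟨0, by omega⟩ : Fin n) := fun j => Nat.zero_le j
  have hcolumns : {c : {p : Fin n × Fin n // p.1 < p.2} → ℝ |
      ∃ s : Fin n → Bool, s ⟨0, by omega⟩ = true ∧
        c = fun p => (if s p.1.1 then (1 : ℝ) else -1) * (if s p.1.2 then (1 : ℝ) else -1)} =
      zzColumn '' ↑({s | s ⟨0, by omega⟩ = true} : Finset (Fin n → Bool)) := by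
    ext c
    simp only [coe_filter, mem_univ, true_and, Set.mem_ofPred_eq, Set.mem_image]
    exact exists_congr fun s => and_congr_right fun _ => eq_comm
  rw [hcolumns]
  exact zero_mem_interior_convexHull_of_orthogonal ⟨fun _ => true, by simp⟩
    (fun s _ p => (abs_zzColumn s p).le) (sum_zzColumn_eq_zero hi₀)
    (sum_zzColumn_mul_zzColumn hi₀)
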